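/- arXiv:1705.01763 — 2 statements merged into one kernel-verified Lean document; each statement's English description precedes it below -/
import Mathlib

section
/- In the monotone case with Doob decomposition X_n = X_1 + M_n + A_n (M a zero-mean martingale, A_n = sum of Y_k with (Y_k) non-increasing), for every L ∈ ℕ and every stopping time τ with τ ≤ L a.s., E[X_τ] ≤ E[X_{min(τ*,L)}], where τ* = inf{n : Y_n ≤ 0} is the myopic stopping time. In particular min(τ*,L) is optimal among stopping times bounded by L. -/
/-!
The martingale part of the Doob decomposition has the same expectation `E[M₀]` at every
bounded stopping time (optional stopping), so only the predictable part `Aₙ = ∑_{k<n} Y_k`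
matters. Since `(Y_k)` is non-increasing, along every path the partial sums of `Y` increase
while `Y_k > 0` and decrease once `Y_k ≤ 0`; hence stopping at the first `k` with `Y_k ≤ 0`
(but at `L` at the latest) maximises `A` pathwise among all times `≤ L`. That time is a.s. the
hitting time of `(-∞, 0]` by the adapted version `E[X_{k+1} | 𝒜_k] - X_k` of `Y`, hence a
stopping time.
-/

open MeasureTheory Finset

namespace MeasureTheory

variable {Ω : Type*} {m0 : MeasurableSpace Ω} {μ : Measure Ω} {𝒢 : Filtration ℕ m0}

theorem Martingale.integral_stoppedValue_eq [SigmaFiniteFiltration μ 𝒢] {f : ℕ → Ω → ℝ}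
    (hf : Martingale f 𝒢 μ) {τ : Ω → ℕ∞} (hτ : IsStoppingTime 𝒢 τ) {N : ℕ}
    (hbdd : ∀ ω, τ ω ≤ N) : ∫ ω, stoppedValue f τ ω ∂μ = ∫ ω, f 0 ω ∂μ := by
  have h0 : IsStoppingTime 𝒢 (fun _ => ((0 : ℕ) : WithTop ℕ)) := isStoppingTime_const 𝒢 0
  have hle : (fun _ => ((0 : ℕ) : WithTop ℕ)) ≤ τ := fun _ => bot_le
  have hsub : ∫ ω, f 0 ω ∂μ ≤ ∫ ω, stoppedValue f τ ω ∂μ :=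
    hf.submartingale.expected_stoppedValue_mono h0 hτ hle hbdd
  have hsuper : ∫ ω, -f 0 ω ∂μ ≤ ∫ ω, -stoppedValue f τ ω ∂μ :=
    hf.neg.submartingale.expected_stoppedValue_mono h0 hτ hle hbdd
  rw [integral_neg, integral_neg] at hsuper
  exact le_antisymm (neg_le_neg_iff.mp hsuper) hsub

theorem Martingale.integral_stoppedValue_le_of_ae_le_sub [SigmaFiniteFiltration μ 𝒢]
    {X M : ℕ → Ω → ℝ} (hM : Martingale M 𝒢 μ) (hX : ∀ n, Integrable (X n) μ)
    {τ π : Ω → ℕ∞} (hτ : IsStoppingTime 𝒢 τ) (hπ : IsStoppingTime 𝒢 π) {N : ℕ}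
    (hτN : ∀ ω, τ ω ≤ N) (hπN : ∀ ω, π ω ≤ N)
    (hpath : stoppedValue (X - M) τ ≤ᵐ[μ] stoppedValue (X - M) π) :
    ∫ ω, stoppedValue X τ ω ∂μ ≤ ∫ ω, stoppedValue X π ω ∂μ := by
  have hXM : ∀ n, Integrable ((X - M) n) μ := fun n => (hX n).sub (hM.integrable n)
  have key := integral_mono_ae (integrable_stoppedValue ℕ hτ hXM hτN)
    (integrable_stoppedValue ℕ hπ hXM hπN) hpath
  have hsplit : ∀ ρ : Ω → ℕ∞, IsStoppingTime 𝒢 ρ → (∀ ω, ρ ω ≤ N) →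
      ∫ ω, stoppedValue (X - M) ρ ω ∂μ =
        ∫ ω, stoppedValue X ρ ω ∂μ - ∫ ω, M 0 ω ∂μ := by
    intro ρ hρ hρN
    rw [← hM.integral_stoppedValue_eq hρ hρN]
    exact integral_sub (integrable_stoppedValue ℕ hρ hX hρN)
      (integrable_stoppedValue ℕ hρ hM.integrable hρN)
  rw [hsplit τ hτ hτN, hsplit π hπ hπN] at key
  linarith

theorem toNat_iInf_inf_eq_hittingBtwn {Ω β : Type*} (u : ℕ → Ω → β) (s : Set β) (L : ℕ)
    (ω : Ω) :
    ((⨅ k : {k : ℕ // u k ω ∈ s}, ((k : ℕ) : ℕ∞)) ⊓ (L : ℕ∞)).toNat =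
      hittingBtwn u s 0 L ω := by
  rw [← ENat.toNat_natCast (hittingBtwn u s 0 L ω)]
  congr 1
  refine le_antisymm ?_ (le_inf (le_iInf fun k => ?_) (mod_cast hittingBtwn_le ω))
  · rcases (hittingBtwn_le (u := u) (s := s) (n := 0) ω).lt_or_eq with hlt | heq
    · exact inf_le_left.trans
        (iInf_le_of_le ⟨_, hittingBtwn_mem_set_of_hittingBtwn_lt hlt⟩ le_rfl)
    · exact inf_le_right.trans_eq (by rw [heq])
  · rcases le_or_gt (k : ℕ) L with hkL | hLk
    · exact mod_cast hittingBtwn_le_of_mem (Nat.zero_le _) hkL k.2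
    · exact mod_cast (hittingBtwn_le ω).trans hLk.le

theorem sum_range_le_sum_range_hittingBtwn {Ω E : Type*} [AddCommMonoid E] [LinearOrder E]
    [IsOrderedAddMonoid E] {u : ℕ → Ω → E} {ω : Ω}
    (hu : Antitone (u · ω)) {n L : ℕ} (hn : n ≤ L) :
    ∑ k ∈ range n, u k ω ≤ ∑ k ∈ range (hittingBtwn u (Set.Iic 0) 0 L ω), u k ω := by
  set t := hittingBtwn u (Set.Iic 0) 0 L ω
  rcases le_or_gt n t with hnt | htn
  · rw [← sum_range_add_sum_Ico _ hnt]
    refine le_add_of_nonneg_right (sum_nonneg fun k hk => ?_)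
    have hk : u k ω ∉ Set.Iic 0 := notMem_of_lt_hittingBtwn (mem_Ico.mp hk).2 (Nat.zero_le k)
    exact (not_le.mp hk).le
  · rw [← sum_range_add_sum_Ico _ htn.le]
    have ht : u t ω ≤ 0 := hittingBtwn_mem_set_of_hittingBtwn_lt (htn.trans_le hn)
    exact add_le_of_nonpos_right (sum_nonpos fun k hk => (hu (mem_Ico.mp hk).1).trans ht)

end MeasureTheory

theorem stmt1_general {Ω : Type*} {m0 : MeasurableSpace Ω} (μ : Measure Ω) [IsProbabilityMeasure μ]
    (𝒜 : Filtration ℕ m0) (X Y M A : ℕ → Ω → ℝ)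
    (hadapt : Adapted 𝒜 X) (hint : ∀ n, Integrable (X n) μ)
    (hY : ∀ k, Y k =ᵐ[μ] fun ω => (μ[X (k + 1) | 𝒜 k]) ω - X k ω)
    (hA : ∀ n ω, A n ω = ∑ k ∈ Finset.range n, Y k ω)
    (hM : Martingale M 𝒜 μ)
    (hdecomp : ∀ n, ∀ᵐ ω ∂μ, X n ω = X 0 ω + M n ω + A n ω)
    (hmono : ∀ᵐ ω ∂μ, ∀ k, Y (k + 1) ω ≤ Y k ω)
    (τ : Ω → ℕ) (hτ : IsStoppingTime 𝒜 (fun ω => (τ ω : WithTop ℕ))) (L : ℕ) (hτL : ∀ ω, τ ω ≤ L) :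
    ∫ ω, X (τ ω) ω ∂μ ≤
      ∫ ω, X (((⨅ k : {k : ℕ // Y k ω ≤ 0}, ((k : ℕ) : ℕ∞)) ⊓ (L : ℕ∞)).toNat) ω ∂μ := by
  set Z : ℕ → Ω → ℝ := fun k => μ[X (k + 1) | 𝒜 k] - X k
  have hZ : Adapted 𝒜 Z := fun k => stronglyMeasurable_condExp.measurable.sub (hadapt k)
  set σ := hittingBtwn Z (Set.Iic 0) 0 L
  have hYZ : ∀ᵐ ω ∂μ, ∀ k, Y k ω = Z k ω := ae_all_iff.mpr hY
  calc ∫ ω, X (τ ω) ω ∂μ ≤ ∫ ω, X (σ ω) ω ∂μ :=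
        hM.integral_stoppedValue_le_of_ae_le_sub hint hτ
          (hZ.isStoppingTime_hittingBtwn measurableSet_Iic) (N := L)
          (fun ω => WithTop.coe_le_coe.mpr (hτL ω))
          (fun ω => WithTop.coe_le_coe.mpr (hittingBtwn_le ω)) ?_
    _ = _ := integral_congr_ae ?_
  · filter_upwards [ae_all_iff.mpr hdecomp, hYZ, hmono] with ω hdec hω hmono
    have hXM : ∀ n, X n ω - M n ω = X 0 ω + ∑ k ∈ range n, Z k ω := fun n => by
      simp only [hdec n, hA, hω]
      ring
    have hZ_anti : Antitone (Z · ω) := antitone_nat_of_succ_le fun k => by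
      simpa only [hω] using hmono k
    change X (τ ω) ω - M (τ ω) ω ≤ X (σ ω) ω - M (σ ω) ω
    rw [hXM, hXM]
    exact (add_le_add_iff_left _).mpr (sum_range_le_sum_range_hittingBtwn hZ_anti (hτL ω))
  · filter_upwards [hYZ] with ω hω
    refine congrArg (X · ω) ((toNat_iInf_inf_eq_hittingBtwn Y (Set.Iic 0) L ω).trans ?_).symm
    simp [σ, hittingBtwn, hω]

/-- In the monotone case with Doob decomposition `X n = X 0 + M n + A n`
(`M` a zero-mean martingale, `A n = ∑_{k<n} Y k` with `(Y k)` a.s. non-increasing), for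
every `L` and every stopping time `τ ≤ L`, `E[X_τ] ≤ E[X_{min(τ*,L)}]`, where
`τ* = inf {n | Y n ≤ 0}` is the myopic stopping time. -/
theorem stmt1 {Ω : Type*} {m0 : MeasurableSpace Ω} (μ : Measure Ω) [IsProbabilityMeasure μ]
    (𝒜 : Filtration ℕ m0) (X Y M A : ℕ → Ω → ℝ)
    (hadapt : Adapted 𝒜 X) (hint : ∀ n, Integrable (X n) μ)
    (hY : ∀ k, Y k =ᵐ[μ] fun ω => (μ[X (k + 1) | 𝒜 k]) ω - X k ω)
    (hA : ∀ n ω, A n ω = ∑ k ∈ Finset.range n, Y k ω)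
    (hM : Martingale M 𝒜 μ) (hM0 : ∀ n, ∫ ω, M n ω ∂μ = 0)
    (hdecomp : ∀ n, ∀ᵐ ω ∂μ, X n ω = X 0 ω + M n ω + A n ω)
    (hmono : ∀ᵐ ω ∂μ, ∀ k, Y (k + 1) ω ≤ Y k ω)
    (τ : Ω → ℕ) (hτ : IsStoppingTime 𝒜 (fun ω => (τ ω : WithTop ℕ))) (L : ℕ) (hτL : ∀ ω, τ ω ≤ L) :
    ∫ ω, X (τ ω) ω ∂μ ≤
      ∫ ω, X (((⨅ k : {k : ℕ // Y k ω ≤ 0}, ((k : ℕ) : ℕ∞)) ⊓ (L : ℕ∞)).toNat) ω ∂μ :=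
  stmt1_general μ 𝒜 X Y M A hadapt hint hY hA hM hdecomp hmono τ hτ L hτL
end

section
/- In the Poisson disorder setting with λ ≥ μ_1 - μ_0 ≥ 0, the process φ_t = λ e^{(λ+μ_0-μ_1)t} e^{N_t log(μ_1/μ_0)} ∫_0^t e^{-(λ+μ_0-μ_1)s} e^{-N_s log(μ_1/μ_0)} ds is non-decreasing in t along every sample path of the counting process N, and consequently π_t = φ_t/(1+φ_t) and Y_t = -λ + (c+λ)π_t are non-decreasing in t. -/
open MeasureTheory Filter Set

/-! Each factor of `φ` is non-negative and non-decreasing: `e^{(λ+μ₀-μ₁)t}` because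
`λ + μ₀ - μ₁ ≥ 0`, `e^{N_t log(μ₁/μ₀)}` because `N` is non-decreasing and `μ₁/μ₀ ≥ 1`, and the
integral because its integrand is positive and the domain `(0, t]` grows with `t`. The maps
`x ↦ x/(1+x)` on `[0, ∞)` and `x ↦ -λ + (c+λ)x` are non-decreasing, so `π` and `Y` inherit the
monotonicity of `φ`. -/

lemma monotone_setIntegral_Ioc {f : ℝ → ℝ} (hf : LocallyIntegrable f) (hf₀ : 0 ≤ f) (a : ℝ) :
    Monotone fun t => ∫ s in Ioc a t, f s := fun _ _ hst =>
  setIntegral_mono_set ((hf.integrableOn_isCompact isCompact_Icc).mono_set Ioc_subset_Icc_self)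
    (Eventually.of_forall hf₀) (Ioc_subset_Ioc_right hst).eventuallyLE

lemma monotoneOn_div_one_add_self : MonotoneOn (fun x : ℝ => x / (1 + x)) (Ici 0) := by
  intro x hx y hy hxy
  rw [mem_Ici] at hx hy
  rw [div_le_div_iff₀ (by linarith) (by linarith)]
  nlinarith

lemma Monotone.div_one_add_self {α : Type*} [Preorder α] {f : α → ℝ} (hf : Monotone f)
    (hf₀ : 0 ≤ f) : Monotone fun t => f t / (1 + f t) :=
  fun _ _ hst => monotoneOn_div_one_add_self (hf₀ _) (hf₀ _) (hf hst)

lemma monotone_exp_natCast_mul_log {N : ℝ → ℕ} (hN : Monotone N) {r : ℝ} (hr : 1 ≤ r) :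
    Monotone fun t => Real.exp ((N t : ℝ) * Real.log r) :=
  Real.exp_monotone.comp ((Nat.mono_cast.comp hN).mul_const (Real.log_nonneg hr))

lemma antitone_exp_neg_mul_mul_exp_neg_natCast_mul_log {k : ℝ} (hk : 0 ≤ k) {N : ℝ → ℕ}
    (hN : Monotone N) {r : ℝ} (hr : 1 ≤ r) :
    Antitone fun s => Real.exp (-k * s) * Real.exp (-(N s : ℝ) * Real.log r) := by
  intro s t hst
  have hexp : Real.exp (-k * t) ≤ Real.exp (-k * s) := by
    rw [Real.exp_le_exp, neg_mul, neg_mul, neg_le_neg_iff]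
    exact mul_le_mul_of_nonneg_left hst hk
  have hNexp : Real.exp (-(N t : ℝ) * Real.log r) ≤ Real.exp (-(N s : ℝ) * Real.log r) := by
    simpa only [neg_mul, Real.exp_neg, inv_le_inv₀ (Real.exp_pos _) (Real.exp_pos _)] using
      monotone_exp_natCast_mul_log hN hr hst
  exact mul_le_mul hexp hNexp (Real.exp_pos _).le (Real.exp_pos _).le

theorem stmt19_general (lam mu0 mu1 c : ℝ)
    (hlam : 0 < lam) (hmu0 : 0 < mu0) (hmu : mu0 ≤ mu1) (hdis : mu1 - mu0 ≤ lam)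
    (hc : 0 < c)
    (N : ℝ → ℕ) (hN : Monotone N)
    (φ π Y : ℝ → ℝ)
    (hφ : ∀ t, φ t = lam * Real.exp ((lam + mu0 - mu1) * t) *
      Real.exp ((N t : ℝ) * Real.log (mu1 / mu0)) *
      ∫ s in Set.Ioc (0 : ℝ) t,
        Real.exp (-(lam + mu0 - mu1) * s) * Real.exp (-(N s : ℝ) * Real.log (mu1 / mu0)))
    (hπ : ∀ t, π t = φ t / (1 + φ t))
    (hY : ∀ t, Y t = -lam + (c + lam) * π t) :
    MonotoneOn φ (Set.Ici 0) ∧ MonotoneOn π (Set.Ici 0) ∧ MonotoneOn Y (Set.Ici 0) := by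
  have hk : 0 ≤ lam + mu0 - mu1 := by linarith
  have hr : 1 ≤ mu1 / mu0 := (one_le_div hmu0).2 hmu
  set prefactor : ℝ → ℝ := fun t =>
    lam * Real.exp ((lam + mu0 - mu1) * t) * Real.exp ((N t : ℝ) * Real.log (mu1 / mu0))
  set integrand : ℝ → ℝ := fun s =>
    Real.exp (-(lam + mu0 - mu1) * s) * Real.exp (-(N s : ℝ) * Real.log (mu1 / mu0))
  have hprefactor : Monotone prefactor :=
    Monotone.mul ((Real.exp_monotone.comp (monotone_id.const_mul hk)).const_mul hlam.le)
      (monotone_exp_natCast_mul_log hN hr) (fun _ => by positivity) (fun _ => by positivity)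
  have hprefactor₀ : 0 ≤ prefactor := fun _ => by positivity
  have hintegrand₀ : 0 ≤ integrand := fun _ => by positivity
  have hintegral := monotone_setIntegral_Ioc
    (antitone_exp_neg_mul_mul_exp_neg_natCast_mul_log hk hN hr).locallyIntegrable hintegrand₀ 0
  have hintegral₀ : ∀ t, 0 ≤ ∫ s in Ioc 0 t, integrand s := fun _ =>
    setIntegral_nonneg measurableSet_Ioc fun s _ => hintegrand₀ s
  have hφ_eq : φ = fun t => prefactor t * ∫ s in Ioc 0 t, integrand s := funext hφ
  have hφ_mono : Monotone φ := hφ_eq ▸ hprefactor.mul hintegral hprefactor₀ hintegral₀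
  have hφ₀ : 0 ≤ φ := hφ_eq ▸ fun t => mul_nonneg (hprefactor₀ t) (hintegral₀ t)
  have hπ_mono : Monotone π := funext hπ ▸ hφ_mono.div_one_add_self hφ₀
  have hY_mono : Monotone Y := funext hY ▸ (hπ_mono.const_mul (by linarith)).const_add _
  exact ⟨hφ_mono.monotoneOn _, hπ_mono.monotoneOn _, hY_mono.monotoneOn _⟩

/-- Poisson disorder, pathwise monotonicity. If `λ ≥ μ₁ - μ₀ ≥ 0`
(`λ, c > 0`, `μ₁ ≥ μ₀ > 0`) and `N : ℝ → ℕ` is a counting-process path (non-decreasing,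
`N 0 = 0`), then
`φ t = λ e^{(λ+μ₀-μ₁)t} e^{N t · log(μ₁/μ₀)} ∫_0^t e^{-(λ+μ₀-μ₁)s} e^{-N s · log(μ₁/μ₀)} ds`
is non-decreasing on `[0,∞)`, and consequently so are `π t = φ t / (1 + φ t)` and
`Y t = -λ + (c + λ) π t`. -/
theorem stmt19 (lam mu0 mu1 c : ℝ)
    (hlam : 0 < lam) (hmu0 : 0 < mu0) (hmu : mu0 ≤ mu1) (hdis : mu1 - mu0 ≤ lam)
    (hc : 0 < c)
    (N : ℝ → ℕ) (hN : Monotone N) (hN0 : N 0 = 0)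
    (φ π Y : ℝ → ℝ)
    (hφ : ∀ t, φ t = lam * Real.exp ((lam + mu0 - mu1) * t) *
      Real.exp ((N t : ℝ) * Real.log (mu1 / mu0)) *
      ∫ s in Set.Ioc (0 : ℝ) t,
        Real.exp (-(lam + mu0 - mu1) * s) * Real.exp (-(N s : ℝ) * Real.log (mu1 / mu0)))
    (hπ : ∀ t, π t = φ t / (1 + φ t))
    (hY : ∀ t, Y t = -lam + (c + lam) * π t) :
    MonotoneOn φ (Set.Ici 0) ∧ MonotoneOn π (Set.Ici 0) ∧ MonotoneOn Y (Set.Ici 0) :=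
  stmt19_general lam mu0 mu1 c hlam hmu0 hmu hdis hc N hN φ π Y hφ hπ hY
end
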